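/- Let μ be the probability measure on ℝ₊ = [0,∞) with density r ↦ r·e^{-r²/2} with respect to Lebesgue measure, and let f : ℝ₊ → ℝ₊ be a bounded non-decreasing function. Then Ent_μ f ≤ ∫_{ℝ₊} f(x)·(x²/2 − 1) dμ(x). -/

import Mathlib

/-!
Put `ν = f·μ`, `M = ν ℝ = ∫ f dμ` and `H x = ν (x, ∞)`. Since `f` is non-decreasing,
`f x · μ (x, ∞) ≤ H x`, that is `log f x ≤ log H x + x²/2` wherever `f x > 0`. Integrating
against `f dμ` gives `Ent_μ f ≤ ∫ f x · x²/2 dμ - ∫ log (M / H) dν`, so it remains to see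
`∫ log (M / H) dν ≥ M`. This holds for every finite measure `ν` on `ℝ`: `ν {H < c} ≥ c` for
`c ≤ M` (under `ν`, `H` is stochastically smaller than the uniform law on `[0, M]`), so by the
layer-cake formula `∫ log (M / H) dν = ∫₀^∞ ν {H < M e^{-t}} dt ≥ ∫₀^∞ M e^{-t} dt = M`.
-/

open MeasureTheory Real Set

/-- Entropy of a nonnegative function `f` w.r.t. a measure `μ`
(with the convention `0 · ln 0 = 0`, via `Real.log 0 = 0`). -/
noncomputable def entropy {X : Type*} [MeasurableSpace X] (μ : MeasureTheory.Measure X)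
    (f : X → ℝ) : ℝ :=
  (∫ x, f x * Real.log (f x) ∂μ) - (∫ x, f x ∂μ) * Real.log (∫ x, f x ∂μ)

open Filter Topology
open scoped ENNReal

theorem log_div_nonneg_of_le {a b : ℝ} (ha : 0 ≤ a) (hab : a ≤ b) : 0 ≤ log (b / a) := by
  rcases ha.eq_or_lt with rfl | ha
  · simp
  · exact log_nonneg ((one_le_div ha).2 hab)

theorem mul_log_le_of_mul_exp_neg_le {g v h m : ℝ} (hg : 0 ≤ g) (hgh : g * exp (-v) ≤ h)
    (hhm : h ≤ m) : g * log (m / h) ≤ g * v + g * log m - g * log g := by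
  rcases hg.eq_or_lt with rfl | hg
  · simp
  have hh : 0 < h := (by positivity : 0 < g * exp (-v)).trans_le hgh
  have hlog : log g - v ≤ log h := by
    have := log_le_log (by positivity) hgh
    rwa [log_mul hg.ne' (exp_pos _).ne', log_exp, ← sub_eq_add_neg] at this
  rw [log_div (hh.trans_le hhm).ne' hh.ne']
  nlinarith [mul_le_mul_of_nonneg_left hlog hg.le]

section Tail

variable (ν : Measure ℝ) [IsFiniteMeasure ν]

theorem tendsto_measure_Ioi_atTop : Tendsto (fun x => ν (Ioi x)) atTop (𝓝 0) := by
  have h := tendsto_measure_iInter_atTop (μ := ν) (fun x => measurableSet_Ioi.nullMeasurableSet)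
    (fun _ _ hxy => Ioi_subset_Ioi hxy) ⟨0, measure_ne_top ν _⟩
  rwa [show ⋂ x : ℝ, Ioi x = ∅ from iInter_eq_empty_iff.2 fun x => ⟨x, lt_irrefl x⟩,
    measure_empty] at h

theorem tendsto_measure_Ioi_nhdsLT (a : ℝ) :
    Tendsto (fun x => ν (Ioi x)) (𝓝[<] a) (𝓝 (ν (Ici a))) := by
  have h := tendsto_measure_biInter_gt (μ := ν) (ι := ℝᵒᵈ) (a := OrderDual.toDual a)
    (s := fun r => Ioi (OrderDual.ofDual r)) (fun _ _ => measurableSet_Ioi.nullMeasurableSet)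
    (fun _ _ _ hij => Ioi_subset_Ioi hij)
    ⟨OrderDual.toDual (a - 1), sub_one_lt a, measure_ne_top ν _⟩
  have hIci : ⋂ r < a, Ioi r = Ici a := by
    ext y
    simpa [mem_iInter₂] using forall_lt_iff_le (a := a) (b := y)
  rw [← hIci]
  exact h

theorem antitone_measureReal_Ioi : Antitone fun x => ν.real (Ioi x) :=
  fun _ _ hxy => measureReal_mono (Ioi_subset_Ioi hxy)

theorem le_measure_setOf_measure_Ioi_lt {c : ℝ≥0∞} (hc : c ≤ ν univ) :
    c ≤ ν {x | ν (Ioi x) < c} := by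
  set S := {x | ν (Ioi x) < c}
  have hS : IsUpperSet S := fun a b hab ha => (measure_mono (Ioi_subset_Ioi hab)).trans_lt ha
  by_cases hbdd : BddBelow S
  swap
  · have hSuniv : S = univ := eq_univ_of_forall fun x => by
      obtain ⟨y, hyS, hyx⟩ := not_bddBelow_iff.1 hbdd x
      exact hS hyx.le hyS
    rwa [hSuniv]
  rcases S.eq_empty_or_nonempty with hempty | hne
  · have hle : ∀ x, c ≤ ν (Ioi x) := fun x => not_lt.1 (eq_empty_iff_forall_notMem.1 hempty x)
    exact (ge_of_tendsto' (tendsto_measure_Ioi_atTop ν) hle).trans zero_le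
  set s := sInf S
  have hIoi : Ioi s ⊆ S := fun x hx => by
    obtain ⟨y, hyS, hyx⟩ := exists_lt_of_csInf_lt hne hx
    exact hS hyx.le hyS
  by_cases hs : s ∈ S
  · have hlow : ∀ y < s, c ≤ ν (Ioi y) := fun y hy =>
      not_lt.1 fun h => (csInf_le hbdd h).not_gt hy
    calc c ≤ ν (Ici s) :=
          ge_of_tendsto (tendsto_measure_Ioi_nhdsLT ν s) (eventually_nhdsWithin_of_forall hlow)
      _ ≤ ν S := measure_mono fun x hx => hS hx hs
  · exact (not_lt.1 hs).trans (measure_mono hIoi)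

theorem ofReal_measureReal_univ_le_lintegral_log_div (hν : ∀ᵐ x ∂ν, 0 < ν (Ioi x)) :
    ENNReal.ofReal (ν.real univ) ≤
      ∫⁻ x, ENNReal.ofReal (log (ν.real univ / ν.real (Ioi x))) ∂ν := by
  set M := ν.real univ
  have hmeas : Measurable fun x => log (M / ν.real (Ioi x)) :=
    (measurable_const.div (antitone_measureReal_Ioi ν).measurable).log
  rw [lintegral_eq_lintegral_meas_lt ν (ae_of_all _ fun x => log_div_nonneg_of_le
    measureReal_nonneg (measureReal_mono (subset_univ _))) hmeas.aemeasurable]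
  have hlayer : ∀ t ∈ Ioi (0 : ℝ),
      ENNReal.ofReal (M * exp (-t)) ≤ ν {x | t < log (M / ν.real (Ioi x))} := by
    intro t ht
    have hc : ENNReal.ofReal (M * exp (-t)) ≤ ν univ := by
      rw [← ofReal_measureReal (measure_ne_top ν univ)]
      exact ENNReal.ofReal_le_ofReal
        (mul_le_of_le_one_right measureReal_nonneg (exp_le_one_iff.2 (neg_nonpos.2 (le_of_lt ht))))
    refine (le_measure_setOf_measure_Ioi_lt ν hc).trans (measure_mono_ae ?_)
    filter_upwards [hν] with x hpos hlt
    have hH : 0 < ν.real (Ioi x) := ENNReal.toReal_pos hpos.ne' (measure_ne_top ν _)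
    have hHlt : ν.real (Ioi x) < M * exp (-t) :=
      (ENNReal.lt_ofReal_iff_toReal_lt (measure_ne_top ν _)).1 hlt
    show t < log (M / ν.real (Ioi x))
    rw [lt_log_iff_exp_lt (div_pos (hH.trans_le (measureReal_mono (subset_univ _))) hH),
      lt_div_iff₀ hH]
    calc exp t * ν.real (Ioi x) < exp t * (M * exp (-t)) := by gcongr
      _ = M := by rw [mul_left_comm, ← exp_add, add_neg_cancel, exp_zero, mul_one]
  calc ENNReal.ofReal M = ∫⁻ t in Ioi 0, ENNReal.ofReal (M * exp (-t)) := by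
        rw [← ofReal_integral_eq_lintegral_ofReal ((integrableOn_exp_neg_Ioi 0).const_mul M)
          (ae_of_all _ fun t => by positivity), integral_const_mul, integral_exp_neg_Ioi_zero,
          mul_one]
    _ ≤ _ := setLIntegral_mono' measurableSet_Ioi hlayer

end Tail

theorem measureReal_withDensity_ofReal {α : Type*} [MeasurableSpace α] {μ : Measure α}
    {g : α → ℝ} (hg0 : ∀ x, 0 ≤ g x) (hg : Integrable g μ) {s : Set α} (hs : MeasurableSet s) :
    (μ.withDensity fun x => ENNReal.ofReal (g x)).real s = ∫ x in s, g x ∂μ := by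
  rw [measureReal_def, withDensity_apply _ hs, ← ofReal_integral_eq_lintegral_ofReal
    hg.integrableOn (ae_of_all _ fun x => hg0 x),
    ENNReal.toReal_ofReal (setIntegral_nonneg hs fun x _ => hg0 x)]

theorem ofReal_integral_le_lintegral_mul_log_div_setIntegral_Ioi {μ : Measure ℝ} {g : ℝ → ℝ}
    (hg0 : ∀ x, 0 ≤ g x) (hg : Integrable g μ)
    (hpos : ∀ᵐ x ∂μ, 0 < g x → 0 < ∫ y in Ioi x, g y ∂μ) :
    ENNReal.ofReal (∫ x, g x ∂μ) ≤
      ∫⁻ x, ENNReal.ofReal (g x * log ((∫ y, g y ∂μ) / ∫ y in Ioi x, g y ∂μ)) ∂μ := by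
  set ν := μ.withDensity fun x => ENNReal.ofReal (g x)
  have : IsFiniteMeasure ν := isFiniteMeasure_withDensity_ofReal hg.hasFiniteIntegral
  have hνIoi : ∀ x, ν.real (Ioi x) = ∫ y in Ioi x, g y ∂μ := fun x =>
    measureReal_withDensity_ofReal hg0 hg measurableSet_Ioi
  have hνuniv : ν.real univ = ∫ y, g y ∂μ := by
    rw [measureReal_withDensity_ofReal hg0 hg MeasurableSet.univ, Measure.restrict_univ]
  have hν : ∀ᵐ x ∂ν, 0 < ν (Ioi x) := by
    rw [ae_withDensity_iff' hg.aemeasurable.ennreal_ofReal]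
    filter_upwards [hpos] with x hx hgx
    have hgx : 0 < g x := ENNReal.ofReal_pos.1 (pos_iff_ne_zero.2 hgx)
    have hIoi := hx hgx
    rw [← hνIoi, measureReal_def] at hIoi
    exact (ENNReal.toReal_pos_iff.1 hIoi).1
  have hlog : Measurable fun x => log (ν.real univ / ν.real (Ioi x)) :=
    (measurable_const.div (antitone_measureReal_Ioi ν).measurable).log
  have key := ofReal_measureReal_univ_le_lintegral_log_div ν hν
  rw [lintegral_withDensity_eq_lintegral_mul₀ hg.aemeasurable.ennreal_ofReal
    hlog.ennreal_ofReal.aemeasurable] at key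
  simpa only [hνIoi, hνuniv, Pi.mul_apply, ← ENNReal.ofReal_mul (hg0 _)] using key

theorem mul_measureReal_Ioi_le_setIntegral {μ : Measure ℝ} [IsFiniteMeasure μ] {g : ℝ → ℝ}
    (hg_mono : Monotone g) (hg : Integrable g μ) (x : ℝ) :
    g x * μ.real (Ioi x) ≤ ∫ y in Ioi x, g y ∂μ := by
  calc g x * μ.real (Ioi x) = ∫ _ in Ioi x, g x ∂μ := by
        rw [setIntegral_const, smul_eq_mul, mul_comm]
    _ ≤ _ := setIntegral_mono_on (integrableOn_const (measure_ne_top _ _)) hg.integrableOn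
        measurableSet_Ioi fun y hy => hg_mono hy.le

theorem entropy_le_integral_mul_sub_one {μ : Measure ℝ} [IsFiniteMeasure μ] {g V : ℝ → ℝ}
    (hg_mono : Monotone g) (hg0 : ∀ x, 0 ≤ g x) (hg : Integrable g μ)
    (hglog : Integrable (fun x => g x * log (g x)) μ) (hgV : Integrable (fun x => g x * V x) μ)
    (hV : ∀ᵐ x ∂μ, exp (-V x) ≤ μ.real (Ioi x)) :
    entropy μ g ≤ ∫ x, g x * (V x - 1) ∂μ := by
  set M := ∫ x, g x ∂μ
  have hHM : ∀ x, ∫ y in Ioi x, g y ∂μ ≤ M := fun x =>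
    setIntegral_le_integral hg (ae_of_all _ hg0)
  have hgH : ∀ᵐ x ∂μ, g x * exp (-V x) ≤ ∫ y in Ioi x, g y ∂μ := by
    filter_upwards [hV] with x hx
    exact (mul_le_mul_of_nonneg_left hx (hg0 x)).trans
      (mul_measureReal_Ioi_le_setIntegral hg_mono hg x)
  have hgVM : Integrable (fun x => g x * V x + g x * log M) μ := hgV.add (hg.mul_const _)
  have hF : Integrable (fun x => g x * V x + g x * log M - g x * log (g x)) μ := hgVM.sub hglog
  have hlog_bounds : ∀ᵐ x ∂μ, 0 ≤ g x * log (M / ∫ y in Ioi x, g y ∂μ) ∧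
      g x * log (M / ∫ y in Ioi x, g y ∂μ) ≤ g x * V x + g x * log M - g x * log (g x) :=
    hgH.mono fun x hx => ⟨mul_nonneg (hg0 x) (log_div_nonneg_of_le
      (setIntegral_nonneg measurableSet_Ioi fun y _ => hg0 y) (hHM x)),
      mul_log_le_of_mul_exp_neg_le (hg0 x) hx (hHM x)⟩
  have hpos : ∀ᵐ x ∂μ, 0 < g x → 0 < ∫ y in Ioi x, g y ∂μ :=
    hgH.mono fun x hx hgx => (by positivity : 0 < g x * exp (-V x)).trans_le hx
  have hMF : M ≤ ∫ x, (g x * V x + g x * log M - g x * log (g x)) ∂μ := by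
    have hF0 : 0 ≤ᵐ[μ] fun x => g x * V x + g x * log M - g x * log (g x) :=
      hlog_bounds.mono fun x hx => hx.1.trans hx.2
    rw [← ENNReal.ofReal_le_ofReal_iff (integral_nonneg_of_ae hF0),
      ofReal_integral_eq_lintegral_ofReal hF hF0]
    exact (ofReal_integral_le_lintegral_mul_log_div_setIntegral_Ioi hg0 hg hpos).trans
      (lintegral_mono_ae (hlog_bounds.mono fun x hx => ENNReal.ofReal_le_ofReal hx.2))
  rw [integral_sub hgVM hglog, integral_add hgV (hg.mul_const _),
    integral_mul_const] at hMF
  have hrhs : ∫ x, g x * (V x - 1) ∂μ = ∫ x, g x * V x ∂μ - M := by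
    simp_rw [mul_sub, mul_one]
    exact integral_sub hgV hg
  rw [entropy, hrhs]
  linarith

theorem Continuous.integrable_comp_of_mapsTo_Icc {α : Type*} [MeasurableSpace α] {μ : Measure α}
    [IsFiniteMeasure μ] {g : α → ℝ} {φ : ℝ → ℝ} (hφ : Continuous φ) (hg : Measurable g) {a b : ℝ}
    (hab : ∀ x, g x ∈ Icc a b) : Integrable (fun x => φ (g x)) μ := by
  obtain ⟨K, hK⟩ := isCompact_Icc.exists_bound_of_continuousOn hφ.continuousOn
  exact .of_bound (hφ.measurable.comp hg).aestronglyMeasurable K (ae_of_all _ fun x => hK _ (hab x))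

/-- The Rayleigh distribution: the law of `‖G‖` for a standard Gaussian vector `G` in `ℝ²`. -/
noncomputable def rayleigh : Measure ℝ :=
  (volume.restrict (Ici 0)).withDensity fun r => ENNReal.ofReal (r * exp (-r ^ 2 / 2))

theorem hasDerivAt_neg_exp_neg_sq_div_two (x : ℝ) :
    HasDerivAt (fun r => -exp (-r ^ 2 / 2)) (x * exp (-x ^ 2 / 2)) x := by
  have h : HasDerivAt (fun r : ℝ => -r ^ 2 / 2) (-x) x := by
    simpa using (((hasDerivAt_pow 2 x).neg).div_const 2).congr_deriv (by ring)
  exact h.exp.neg.congr_deriv (by ring)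

theorem tendsto_neg_exp_neg_sq_div_two_atTop :
    Tendsto (fun r : ℝ => -exp (-r ^ 2 / 2)) atTop (𝓝 0) := by
  have h : Tendsto (fun r : ℝ => -r ^ 2 / 2) atTop atBot :=
    (tendsto_neg_atTop_atBot.comp (tendsto_pow_atTop two_ne_zero)).atBot_div_const two_pos
  simpa using (tendsto_exp_atBot.comp h).neg

theorem lintegral_mul_exp_neg_sq_div_two_Ioi {a : ℝ} (ha : 0 ≤ a) :
    ∫⁻ r in Ioi a, ENNReal.ofReal (r * exp (-r ^ 2 / 2)) = ENNReal.ofReal (exp (-a ^ 2 / 2)) := by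
  have hnonneg : ∀ r ∈ Ioi a, 0 ≤ r * exp (-r ^ 2 / 2) := fun r hr =>
    mul_nonneg (ha.trans hr.le) (exp_pos _).le
  rw [← ofReal_integral_eq_lintegral_ofReal
    (integrableOn_Ioi_deriv_of_nonneg' (fun x _ => hasDerivAt_neg_exp_neg_sq_div_two x) hnonneg
      tendsto_neg_exp_neg_sq_div_two_atTop)
    ((ae_restrict_iff' measurableSet_Ioi).2 (ae_of_all _ hnonneg)),
    integral_Ioi_of_hasDerivAt_of_nonneg' (fun x _ => hasDerivAt_neg_exp_neg_sq_div_two x) hnonneg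
      tendsto_neg_exp_neg_sq_div_two_atTop, zero_sub, neg_neg]

theorem rayleigh_apply {s : Set ℝ} (hs : MeasurableSet s) :
    rayleigh s = ∫⁻ r in s ∩ Ici 0, ENNReal.ofReal (r * exp (-r ^ 2 / 2)) := by
  rw [rayleigh, withDensity_apply _ hs, Measure.restrict_restrict hs]

theorem rayleigh_real_Ioi {a : ℝ} (ha : 0 ≤ a) : rayleigh.real (Ioi a) = exp (-a ^ 2 / 2) := by
  rw [measureReal_def, rayleigh_apply measurableSet_Ioi, inter_eq_left.2 (Ioi_subset_Ici ha),
    lintegral_mul_exp_neg_sq_div_two_Ioi ha, ENNReal.toReal_ofReal (exp_pos _).le]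

instance : IsProbabilityMeasure rayleigh where
  measure_univ := by
    rw [rayleigh_apply MeasurableSet.univ, univ_inter, ← setLIntegral_congr Ioi_ae_eq_Ici,
      lintegral_mul_exp_neg_sq_div_two_Ioi le_rfl]
    simp

theorem ae_nonneg_rayleigh : ∀ᵐ r ∂rayleigh, 0 ≤ r :=
  (withDensity_absolutelyContinuous _ _).ae_le (ae_restrict_mem measurableSet_Ici)

theorem integrable_sq_rayleigh : Integrable (fun r => r ^ 2) rayleigh := by
  rw [rayleigh, integrable_withDensity_iff (by fun_prop)
    (ae_of_all _ fun _ => ENNReal.ofReal_lt_top), ← IntegrableOn,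
    integrableOn_Ici_iff_integrableOn_Ioi]
  refine (integrableOn_rpow_mul_exp_neg_mul_sq (b := 1 / 2) one_half_pos
    (s := 3) (by norm_num)).congr_fun (fun r hr => ?_) measurableSet_Ioi
  dsimp only
  rw [ENNReal.toReal_ofReal (mul_nonneg (le_of_lt hr) (exp_pos _).le), rpow_ofNat]
  ring_nf

theorem entropy_le_integral_gaussian_radial
    (μ : Measure ℝ)
    (hμ : μ = (volume.restrict (Set.Ici (0 : ℝ))).withDensity
      fun r => ENNReal.ofReal (r * Real.exp (-r ^ 2 / 2)))
    (f : ℝ → ℝ)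
    (hf_nonneg : ∀ x ∈ Set.Ici (0 : ℝ), 0 ≤ f x)
    (hf_mono : MonotoneOn f (Set.Ici (0 : ℝ)))
    (hf_bdd : ∃ C : ℝ, ∀ x ∈ Set.Ici (0 : ℝ), f x ≤ C) :
    entropy μ f ≤ ∫ x, f x * (x ^ 2 / 2 - 1) ∂μ := by
  obtain rfl : μ = rayleigh := hμ
  obtain ⟨C, hC⟩ := hf_bdd
  set g := fun x => f (max x 0)
  have hg_mono : Monotone g := fun x y hxy =>
    hf_mono (le_max_right x 0) (le_max_right y 0) (max_le_max_right 0 hxy)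
  have hg_mem : ∀ x, g x ∈ Icc 0 C := fun x =>
    ⟨hf_nonneg _ (le_max_right x 0), hC _ (le_max_right x 0)⟩
  have hfg : f =ᵐ[rayleigh] g := ae_nonneg_rayleigh.mono fun x hx => by simp [g, max_eq_left hx]
  have hV : ∀ᵐ x ∂rayleigh, exp (-(x ^ 2 / 2)) ≤ rayleigh.real (Ioi x) :=
    ae_nonneg_rayleigh.mono fun x hx => by rw [rayleigh_real_Ioi hx, neg_div]
  have hgV : Integrable (fun x => g x * (x ^ 2 / 2)) rayleigh :=
    (integrable_sq_rayleigh.div_const 2).bdd_mul hg_mono.measurable.aestronglyMeasurable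
      (ae_of_all _ fun x => by rw [norm_of_nonneg (hg_mem x).1]; exact (hg_mem x).2)
  have key := entropy_le_integral_mul_sub_one hg_mono (fun x => (hg_mem x).1)
    (continuous_id'.integrable_comp_of_mapsTo_Icc hg_mono.measurable hg_mem)
    (continuous_mul_log.integrable_comp_of_mapsTo_Icc hg_mono.measurable hg_mem) hgV hV
  have hent : entropy rayleigh f = entropy rayleigh g := by
    rw [entropy, entropy, integral_congr_ae hfg,
      integral_congr_ae (g := fun x => g x * log (g x)) (hfg.mono fun x hx => by simp only [hx])]
  rwa [hent, integral_congr_ae (g := fun x => g x * (x ^ 2 / 2 - 1))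
    (hfg.mono fun x hx => by simp only [hx])]
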